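/- Let f : ℝ → ℝ be twice continuously differentiable and let u : ℝ × [0,∞) → ℝ be twice continuously differentiable and satisfy, at every point (t,x), the equation u_t(t,x) + f'(u(t,x))·u_x(t,x) = (1/2)∫₀^x f''(u(t,y))·u_x(t,y)² dy. Then the energy conservation law (u_x²)_t + (f'(u)·u_x²)_x = 0 holds at every point, i.e. ∂_t(u_x(t,x)²) + ∂_x(f'(u(t,x))·u_x(t,x)²) = 0 for all (t,x). -/

import Mathlib

/-!
Differentiating the equation in `x` (one-sidedly at `x = 0`, since it only holds for `x ≥ 0`)
turns the integral term into `½ f''(u) u_x²`, so with `u_tx = u_xt` the slope `q = u_x` satisfies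
`q_t + f'(u) q_x + ½ f''(u) q² = 0`, and
`(q²)_t + (f'(u) q²)_x = 2q q_t + f''(u) q³ + 2 f'(u) q q_x` is `2q` times its left side.
-/

open MeasureTheory Set Real intervalIntegral

variable {E : Type*} [NormedAddCommGroup E] [NormedSpace ℝ E]

theorem HasDerivAt.eq_of_eqOn_Ici {f g : ℝ → E} {f' g' : E} {a x : ℝ} (hf : HasDerivAt f f' x)
    (hg : HasDerivAt g g' x) (hfg : EqOn f g (Ici a)) (hx : a ≤ x) : f' = g' :=
  (uniqueDiffOn_Ici a x hx).eq_deriv _ hf.hasDerivWithinAt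
    (hg.hasDerivWithinAt.congr hfg (hfg hx))

theorem HasFDerivAt.hasDerivAt_slice_left {F : ℝ × ℝ → E} {L : ℝ × ℝ →L[ℝ] E} {s z : ℝ}
    (h : HasFDerivAt F L (s, z)) : HasDerivAt (fun w => F (w, z)) (L (1, 0)) s := by
  simpa [Function.comp_def] using (h.comp s (hasFDerivAt_prodMk_left s z)).hasDerivAt

theorem HasFDerivAt.hasDerivAt_slice_right {F : ℝ × ℝ → E} {L : ℝ × ℝ →L[ℝ] E} {s z : ℝ}
    (h : HasFDerivAt F L (s, z)) : HasDerivAt (fun w => F (s, w)) (L (0, 1)) z := by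
  simpa [Function.comp_def] using (h.comp z (hasFDerivAt_prodMk_right s z)).hasDerivAt

section Uncurry

variable {u : ℝ → ℝ → E}

theorem DifferentiableAt.of_uncurry_left {s z : ℝ}
    (hu : DifferentiableAt ℝ (Function.uncurry u) (s, z)) :
    DifferentiableAt ℝ (fun s => u s z) s :=
  hu.hasFDerivAt.hasDerivAt_slice_left.differentiableAt

theorem DifferentiableAt.of_uncurry_right {s z : ℝ}
    (hu : DifferentiableAt ℝ (Function.uncurry u) (s, z)) : DifferentiableAt ℝ (u s) z :=
  hu.hasFDerivAt.hasDerivAt_slice_right.differentiableAt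

theorem DifferentiableAt.deriv_uncurry_left {s z : ℝ}
    (hu : DifferentiableAt ℝ (Function.uncurry u) (s, z)) :
    _root_.deriv (fun s => u s z) s = fderiv ℝ (Function.uncurry u) (s, z) (1, 0) :=
  hu.hasFDerivAt.hasDerivAt_slice_left.deriv

theorem DifferentiableAt.deriv_uncurry_right {s z : ℝ}
    (hu : DifferentiableAt ℝ (Function.uncurry u) (s, z)) :
    _root_.deriv (u s) z = fderiv ℝ (Function.uncurry u) (s, z) (0, 1) :=
  hu.hasFDerivAt.hasDerivAt_slice_right.deriv

theorem ContDiff.uncurry_deriv_left {n : WithTop ℕ∞}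
    (hu : ContDiff ℝ (n + 1) (Function.uncurry u)) :
    ContDiff ℝ n (Function.uncurry fun s z => deriv (fun s => u s z) s) := by
  have hd := hu.differentiable (by simp)
  convert (hu.fderiv_right le_rfl).clm_apply (contDiff_const (c := ((1 : ℝ), (0 : ℝ)))) with p
  exact (hd p).deriv_uncurry_left

theorem ContDiff.uncurry_deriv_right {n : WithTop ℕ∞}
    (hu : ContDiff ℝ (n + 1) (Function.uncurry u)) :
    ContDiff ℝ n (Function.uncurry fun s => deriv (u s)) := by
  have hd := hu.differentiable (by simp)
  convert (hu.fderiv_right le_rfl).clm_apply (contDiff_const (c := ((0 : ℝ), (1 : ℝ)))) with p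
  exact (hd p).deriv_uncurry_right

theorem ContDiff.deriv_deriv_uncurry_comm (hu : ContDiff ℝ 2 (Function.uncurry u)) (t x : ℝ) :
    deriv (fun s => deriv (u s) x) t = deriv (fun z => deriv (fun s => u s z) t) x := by
  set F := Function.uncurry u
  have hd := hu.differentiable (by simp)
  have hF : HasFDerivAt (fderiv ℝ F) (fderiv ℝ (fderiv ℝ F) (t, x)) (t, x) :=
    ((hu.fderiv_right (m := 1) le_rfl).differentiable one_ne_zero _).hasFDerivAt
  have happly : ∀ v : ℝ × ℝ, HasFDerivAt (fun p => fderiv ℝ F p v)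
      ((fderiv ℝ (fderiv ℝ F) (t, x)).flip v) (t, x) := fun v => by
    simpa using hF.clm_apply (hasFDerivAt_const v (t, x))
  simp only [fun s z => (hd (s, z)).deriv_uncurry_right, fun s z => (hd (s, z)).deriv_uncurry_left]
  rw [(happly (0, 1)).hasDerivAt_slice_left.deriv, (happly (1, 0)).hasDerivAt_slice_right.deriv]
  exact hu.contDiffAt.isSymmSndFDerivAt (by simp) (1, 0) (0, 1)

end Uncurry

theorem deriv_add_mul_deriv_eq_zero_of_eq_integral {f : ℝ → ℝ} (hf : ContDiff ℝ 2 f)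
    {v q p : ℝ → ℝ} {x : ℝ} (hx : 0 ≤ x) (hv : ∀ z, HasDerivAt v (q z) z) (hq : Continuous q)
    (hqx : DifferentiableAt ℝ q x) (hpx : DifferentiableAt ℝ p x)
    (heq : ∀ z, 0 ≤ z → p z + deriv f (v z) * q z =
      (1 / 2) * ∫ y in (0 : ℝ)..z, deriv (deriv f) (v y) * q y ^ 2) :
    deriv p x + deriv f (v x) * deriv q x + (1 / 2) * deriv (deriv f) (v x) * q x ^ 2 = 0 := by
  have hv_cont : Continuous v := continuous_iff_continuousAt.2 fun z => (hv z).continuousAt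
  have hf'' : Continuous (deriv (deriv f)) := (hf.deriv' (n := 1)).continuous_deriv_one
  have hlhs : HasDerivAt (fun z => p z + deriv f (v z) * q z)
      (deriv p x + (deriv (deriv f) (v x) * q x * q x + deriv f (v x) * deriv q x)) x :=
    hpx.hasDerivAt.add
      (((hf.differentiable_deriv_two (v x)).hasDerivAt.comp x (hv x)).mul hqx.hasDerivAt)
  have hrhs : HasDerivAt (fun z => (1 / 2) * ∫ y in (0 : ℝ)..z, deriv (deriv f) (v y) * q y ^ 2)
      ((1 / 2) * (deriv (deriv f) (v x) * q x ^ 2)) x :=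
    (((hf''.comp hv_cont).mul (hq.pow 2)).integral_hasStrictDerivAt 0 x).hasDerivAt.const_mul _
  linear_combination hlhs.eq_of_eqOn_Ici hrhs heq hx

theorem stmt8 (f : ℝ → ℝ) (hf : ContDiff ℝ 2 f)
    (u : ℝ → ℝ → ℝ) (hu : ContDiff ℝ 2 (Function.uncurry u))
    (heq : ∀ t x : ℝ, 0 ≤ x →
      deriv (fun s => u s x) t + deriv f (u t x) * deriv (fun z => u t z) x =
        (1 / 2) * ∫ y in (0:ℝ)..x, deriv (deriv f) (u t y) * (deriv (fun z => u t z) y) ^ 2) :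
    ∀ t x : ℝ, 0 ≤ x →
      deriv (fun s => (deriv (fun z => u s z) x) ^ 2) t +
        deriv (fun z => deriv f (u t z) * (deriv (fun w => u t w) z) ^ 2) x = 0 := by
  intro t x hx
  have hd : Differentiable ℝ (Function.uncurry u) := hu.differentiable (by simp)
  have hux : Differentiable ℝ (Function.uncurry fun s => deriv (u s)) :=
    (hu.uncurry_deriv_right (n := 1)).differentiable one_ne_zero
  have hut : Differentiable ℝ (Function.uncurry fun s z => deriv (fun s => u s z) s) :=
    (hu.uncurry_deriv_left (n := 1)).differentiable one_ne_zero
  have hu_x : ∀ z, HasDerivAt (u t) (deriv (u t) z) z := fun z =>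
    (hd (t, z)).of_uncurry_right.hasDerivAt
  have hux_t := (hux (t, x)).of_uncurry_left.hasDerivAt
  have hux_x := (hux (t, x)).of_uncurry_right.hasDerivAt
  have hf'u : HasDerivAt (fun z => deriv f (u t z)) (deriv (deriv f) (u t x) * deriv (u t) x) x :=
    (hf.differentiable_deriv_two (u t x)).hasDerivAt.comp x (hu_x x)
  have hlocal := deriv_add_mul_deriv_eq_zero_of_eq_integral hf hx hu_x
    (hux.continuous.comp (Continuous.prodMk_right t)) hux_x.differentiableAt
    (hut (t, x)).of_uncurry_right (heq t)
  rw [← hu.deriv_deriv_uncurry_comm] at hlocal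
  rw [(hux_t.fun_pow 2).deriv, (hf'u.fun_mul (hux_x.fun_pow 2)).deriv]
  linear_combination (2 * deriv (u t) x) * hlocal
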